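/- Let μ be a finitely supported measure on a set Y, let F be a class of functions on Y with envelope F, and for f ∈ F define the aggregated function f̃(n, y_1, y_2, ...) = Σ_{ℓ=1}^n f(y_ℓ). Given data (N_j, (Y_{ℓ,j})_ℓ) for j in a finite index set J of size Π_C with N̄_r = (1/Π_C) Σ_{j∈J} N_j^r > 0, define the empirical measures μ_C = (1/Π_C) Σ_j δ_{(N_j, Y⃗_j)} and Q_C^r = (1/(N̄_r Π_C)) Σ_j N_j^{r−1} Σ_{ℓ=1}^{N_j} δ_{Y_{ℓ,j}}. Then for every ε > 0 and r ≥ 1, N(ε, F̃, ||·||_{μ_C, r}) ≤ N(ε / N̄_r^{1/r}, F, ||·||_{Q_C^r, r}), where F̃ = {f̃ : f ∈ F}. -/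
import Mathlib


/-- `coverNum ν ε G` : the minimal number of closed `ν`-balls of radius `ε` with
centers in `G` needed to cover `G` (with value `⊤` if no finite cover exists). -/
noncomputable def coverNum {V : Type*} [AddCommGroup V] (ν : V → ℝ) (ε : ℝ) (G : Set V) : ℕ∞ :=
  sInf {n : ℕ∞ | ∃ T : Finset V, ↑T ⊆ G ∧ (T.card : ℕ∞) = n ∧
    ∀ g ∈ G, ∃ c ∈ T, ν (g - c) ≤ ε}

/-- Jensen / power-mean inequality: `|∑_{ℓ<n} a ℓ| ^ r ≤ n ^ (r-1) * ∑_{ℓ<n} |a ℓ| ^ r`. -/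
lemma abs_sum_rpow_le_card_rpow_mul (n : ℕ) (a : ℕ → ℝ) {r : ℝ} (hr : 1 ≤ r) :
    |∑ ℓ ∈ Finset.range n, a ℓ| ^ r ≤
      (n : ℝ) ^ (r - 1) * ∑ ℓ ∈ Finset.range n, |a ℓ| ^ r := by
  rcases Nat.eq_zero_or_pos n with hn | hn
  · subst hn
    simp [Real.zero_rpow (by positivity : r ≠ 0)]
  · have hn' : (0 : ℝ) < n := by exact_mod_cast hn
    set S := ∑ ℓ ∈ Finset.range n, |a ℓ| with hS
    set T := ∑ ℓ ∈ Finset.range n, |a ℓ| ^ r with hT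
    have hSnn : 0 ≤ S := Finset.sum_nonneg fun i _ => abs_nonneg _
    have key : ((n : ℝ)⁻¹ * S) ^ r ≤ (n : ℝ)⁻¹ * T := by
      have := Real.rpow_arith_mean_le_arith_mean_rpow (Finset.range n)
        (fun _ => (n : ℝ)⁻¹) (fun ℓ => |a ℓ|) (fun i _ => by positivity)
        (by simp [Finset.sum_const]; field_simp) (fun i _ => abs_nonneg _) hr
      simpa [← Finset.mul_sum] using this
    have h1 : |∑ ℓ ∈ Finset.range n, a ℓ| ^ r ≤ S ^ r :=
      Real.rpow_le_rpow (abs_nonneg _) (Finset.abs_sum_le_sum_abs _ _)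
        (le_trans zero_le_one hr)
    have h2 : S ^ r = (n : ℝ) ^ r * (((n : ℝ)⁻¹ * S) ^ r) := by
      rw [Real.mul_rpow (inv_nonneg.2 hn'.le) hSnn, ← mul_assoc,
        ← Real.mul_rpow hn'.le (inv_nonneg.2 hn'.le), mul_inv_cancel₀ hn'.ne',
        Real.one_rpow, one_mul]
    have h3 : (n : ℝ) ^ r * (((n : ℝ)⁻¹ * S) ^ r) ≤ (n : ℝ) ^ r * ((n : ℝ)⁻¹ * T) :=
      mul_le_mul_of_nonneg_left key (Real.rpow_nonneg hn'.le r)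
    have h4 : (n : ℝ) ^ r * ((n : ℝ)⁻¹ * T) = (n : ℝ) ^ (r - 1) * T := by
      rw [← mul_assoc, Real.rpow_sub hn', Real.rpow_one, div_eq_mul_inv]
    calc |∑ ℓ ∈ Finset.range n, a ℓ| ^ r ≤ S ^ r := h1
      _ = (n : ℝ) ^ r * (((n : ℝ)⁻¹ * S) ^ r) := h2
      _ ≤ (n : ℝ) ^ r * ((n : ℝ)⁻¹ * T) := h3
      _ = (n : ℝ) ^ (r - 1) * T := h4

/-- Covering number bound for the aggregated class
`F̃ = {(n, y₁, y₂, ...) ↦ Σ_{ℓ<n} f(y_ℓ) : f ∈ F}` :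
`N(ε, F̃, ‖·‖_{μ_C,r}) ≤ N(ε / N̄_r^{1/r}, F, ‖·‖_{Q_C^r,r})`, where `μ_C` is the
empirical measure of the cells `(N_j, Y⃗_j)`, `N̄_r = (1/Π_C) Σ_j N_j^r > 0` and
`Q_C^r = (1/(N̄_r Π_C)) Σ_j N_j^{r-1} Σ_{ℓ<N_j} δ_{Y_{ℓ,j}}`. -/
theorem coverNum_aggregated_class_le
    {Y J : Type*} [Fintype J] [Nonempty J]
    (N : J → ℕ) (Yv : J → ℕ → Y) (r : ℝ) (hr : 1 ≤ r)
    (F : Set (Y → ℝ)) (Fenv : Y → ℝ) (henv : ∀ f ∈ F, ∀ y, |f y| ≤ Fenv y)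
    (Nbar : ℝ) (hNbar : Nbar = (Fintype.card J : ℝ)⁻¹ * ∑ j, (N j : ℝ) ^ r)
    (hNbar_pos : 0 < Nbar)
    (ε : ℝ) (hε : 0 < ε) :
    coverNum
      (fun g : (ℕ × (ℕ → Y)) → ℝ =>
        ((Fintype.card J : ℝ)⁻¹ * ∑ j, |g (N j, Yv j)| ^ r) ^ r⁻¹)
      ε
      ((fun f : Y → ℝ => fun p : ℕ × (ℕ → Y) => ∑ ℓ ∈ Finset.range p.1, f (p.2 ℓ)) '' F)
    ≤ coverNum
        (fun f : Y → ℝ =>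
          ((Nbar * (Fintype.card J : ℝ))⁻¹ *
            ∑ j, (N j : ℝ) ^ (r - 1) * ∑ ℓ ∈ Finset.range (N j), |f (Yv j ℓ)| ^ r) ^ r⁻¹)
        (ε / Nbar ^ r⁻¹) F := by
  classical
  set Φ : (Y → ℝ) → (ℕ × (ℕ → Y)) → ℝ :=
    fun f => fun p : ℕ × (ℕ → Y) => ∑ ℓ ∈ Finset.range p.1, f (p.2 ℓ) with hΦ
  have hcJ : (0 : ℝ) < (Fintype.card J : ℝ) := by
    exact_mod_cast Fintype.card_pos
  -- main estimate
  have main : ∀ h : Y → ℝ,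
      ((Fintype.card J : ℝ)⁻¹ * ∑ j, |Φ h (N j, Yv j)| ^ r) ^ r⁻¹ ≤
        Nbar ^ r⁻¹ *
          ((Nbar * (Fintype.card J : ℝ))⁻¹ *
            ∑ j, (N j : ℝ) ^ (r - 1) * ∑ ℓ ∈ Finset.range (N j), |h (Yv j ℓ)| ^ r) ^ r⁻¹ := by
    intro h
    set A := (Nbar * (Fintype.card J : ℝ))⁻¹ *
      ∑ j, (N j : ℝ) ^ (r - 1) * ∑ ℓ ∈ Finset.range (N j), |h (Yv j ℓ)| ^ r with hA
    have hAnn : 0 ≤ A := by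
      apply mul_nonneg (inv_nonneg.2 (mul_nonneg hNbar_pos.le hcJ.le))
      apply Finset.sum_nonneg
      intro j _
      exact mul_nonneg (Real.rpow_nonneg (Nat.cast_nonneg _) _)
        (Finset.sum_nonneg fun i _ => Real.rpow_nonneg (abs_nonneg _) _)
    have hle : (Fintype.card J : ℝ)⁻¹ * ∑ j, |Φ h (N j, Yv j)| ^ r ≤ Nbar * A := by
      have hNA : Nbar * A =
          (Fintype.card J : ℝ)⁻¹ *
            ∑ j, (N j : ℝ) ^ (r - 1) * ∑ ℓ ∈ Finset.range (N j), |h (Yv j ℓ)| ^ r := by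
        rw [hA, ← mul_assoc, mul_inv, ← mul_assoc, mul_inv_cancel₀ hNbar_pos.ne', one_mul]
      rw [hNA]
      apply mul_le_mul_of_nonneg_left _ (inv_nonneg.2 hcJ.le)
      apply Finset.sum_le_sum
      intro j _
      exact abs_sum_rpow_le_card_rpow_mul (N j) (fun ℓ => h (Yv j ℓ)) hr
    calc ((Fintype.card J : ℝ)⁻¹ * ∑ j, |Φ h (N j, Yv j)| ^ r) ^ r⁻¹
        ≤ (Nbar * A) ^ r⁻¹ := by
          apply Real.rpow_le_rpow _ hle (inv_nonneg.2 (le_trans zero_le_one hr))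
          exact mul_nonneg (inv_nonneg.2 hcJ.le)
            (Finset.sum_nonneg fun j _ => Real.rpow_nonneg (abs_nonneg _) _)
      _ = Nbar ^ r⁻¹ * A ^ r⁻¹ := Real.mul_rpow hNbar_pos.le hAnn
  -- compare the two infima
  apply le_sInf
  rintro b ⟨T, hTF, hcard, hcov⟩
  have hmem : ((T.image Φ).card : ℕ∞) ∈
      {n : ℕ∞ | ∃ T' : Finset ((ℕ × (ℕ → Y)) → ℝ), ↑T' ⊆ Φ '' F ∧ (T'.card : ℕ∞) = n ∧
        ∀ g ∈ Φ '' F, ∃ c ∈ T', (fun g : (ℕ × (ℕ → Y)) → ℝ =>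
          ((Fintype.card J : ℝ)⁻¹ * ∑ j, |g (N j, Yv j)| ^ r) ^ r⁻¹) (g - c) ≤ ε} := by
    refine ⟨T.image Φ, ?_, rfl, ?_⟩
    · intro g hg
      simp only [Finset.coe_image, Set.mem_image] at hg ⊢
      obtain ⟨f, hf, rfl⟩ := hg
      exact ⟨f, hTF hf, rfl⟩
    · rintro g ⟨f, hf, rfl⟩
      obtain ⟨c, hc, hle⟩ := hcov f hf
      refine ⟨Φ c, Finset.mem_image_of_mem _ hc, ?_⟩
      have hsub : Φ f - Φ c = Φ (f - c) := by
        funext p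
        simp [hΦ, Finset.sum_sub_distrib]
      simp only [hsub]
      calc ((Fintype.card J : ℝ)⁻¹ * ∑ j, |Φ (f - c) (N j, Yv j)| ^ r) ^ r⁻¹
          ≤ Nbar ^ r⁻¹ *
            ((Nbar * (Fintype.card J : ℝ))⁻¹ *
              ∑ j, (N j : ℝ) ^ (r - 1) *
                ∑ ℓ ∈ Finset.range (N j), |(f - c) (Yv j ℓ)| ^ r) ^ r⁻¹ := main (f - c)
        _ ≤ Nbar ^ r⁻¹ * (ε / Nbar ^ r⁻¹) :=
            mul_le_mul_of_nonneg_left hle (Real.rpow_nonneg hNbar_pos.le _)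
        _ = ε := by
            rw [mul_div_assoc']
            exact mul_div_cancel_left₀ ε
              (ne_of_gt (Real.rpow_pos_of_pos hNbar_pos _))
  calc coverNum _ ε (Φ '' F) ≤ ((T.image Φ).card : ℕ∞) := sInf_le hmem
    _ ≤ (T.card : ℕ∞) := by exact_mod_cast Finset.card_image_le
    _ = b := hcard
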